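/- arXiv:2601.10424 — 4 statements merged into one kernel-verified Lean document; each statement's English description precedes it below -/
import Mathlib

section
/- Let B_{ij} ∈ M₂(ℂ) (1 ≤ i,j ≤ 2) satisfy: (i) Σ_{i,j=1}^{2} ξ^i·conj(ξ^j)·B_{ij} is positive definite for every nonzero ξ ∈ ℂ²; (ii) B_{11} + B_{22} = 2·I; (iii) tr(B_{ij}) = 2·δ_{ij}. Then Φ := D(B_{11}, B_{22}) − D(B_{12}, B_{21}) ≥ 1. -/
/-!
Hermiticity of `∑ ξⁱ conj(ξʲ) B_{ij}` at `ξ = e₁, e₂, e₁ + e₂, e₁ + i e₂` makes the `B_{ii}`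
Hermitian and `B₂₁ = B₁₂ᴴ` (polarization). Substituting `B₂₂ = 2I − B₁₁`, `tr B₁₁ = 2`,
`tr B₁₂ = 0` gives `Φ = tr(B₁₁²)/2 + tr(B₁₂ B₁₂ᴴ)/2`, and
`tr(B₁₁²) = 2 tr B₁₁ − 2 + tr((B₁₁ − I)²) ≥ 2`.
-/

open scoped BigOperators ComplexOrder

noncomputable section

/-- The mixed discriminant of two `2 × 2` complex matrices:
`D(X,Y) = (tr X · tr Y − tr(XY))/2`. -/
def mixedDisc2 (X Y : Matrix (Fin 2) (Fin 2) ℂ) : ℂ :=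
  (Matrix.trace X * Matrix.trace Y - Matrix.trace (X * Y)) / 2

end

open Matrix ComplexConjugate

section Polarization

variable {n : Type*} (B : Fin 2 → Fin 2 → Matrix n n ℂ)

lemma isHermitian_apply_self_of_forall_isHermitian
    (hB : ∀ ξ : Fin 2 → ℂ, (∑ i, ∑ j, (ξ i * conj (ξ j)) • B i j).IsHermitian) (i : Fin 2) :
    (B i i).IsHermitian := by
  fin_cases i
  · simpa [Fin.sum_univ_two] using hB ![1, 0]
  · simpa [Fin.sum_univ_two] using hB ![0, 1]

lemma apply_one_zero_eq_conjTranspose_of_forall_isHermitian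
    (hB : ∀ ξ : Fin 2 → ℂ, (∑ i, ∑ j, (ξ i * conj (ξ j)) • B i j).IsHermitian) :
    B 1 0 = (B 0 1)ᴴ := by
  have h0 := isHermitian_apply_self_of_forall_isHermitian B hB 0
  have h1 := isHermitian_apply_self_of_forall_isHermitian B hB 1
  have hre := (hB ![1, 1]).eq
  have him := (hB ![1, Complex.I]).eq
  simp only [Fin.sum_univ_two, Fin.isValue, cons_val_zero, map_one, mul_one, cons_val_one,
    cons_val_fin_one, one_smul, conjTranspose_add, h0.eq, h1.eq, Complex.conj_I, mul_neg,
    neg_smul, one_mul, Complex.I_mul_I, neg_neg, conjTranspose_neg, conjTranspose_smul, RCLike.star_def] at hre him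
  have hdiff : (B 0 1)ᴴ - (B 1 0)ᴴ = B 1 0 - B 0 1 :=
    smul_right_injective _ Complex.I_ne_zero (by linear_combination (norm := module) him)
  linear_combination (norm := module) (-1 / 2 : ℂ) • (hdiff + hre)

end Polarization

lemma mixedDisc2_of_trace_eq_zero {X : Matrix (Fin 2) (Fin 2) ℂ} (hX : X.trace = 0)
    (Y : Matrix (Fin 2) (Fin 2) ℂ) : mixedDisc2 X Y = -(X * Y).trace / 2 := by
  simp [mixedDisc2, hX]

lemma mixedDisc2_two_smul_one_sub {X : Matrix (Fin 2) (Fin 2) ℂ} (hX : X.trace = 2) :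
    mixedDisc2 X ((2 : ℂ) • 1 - X) = (X * X).trace / 2 := by
  simp only [mixedDisc2, hX, mul_sub, trace_sub, trace_smul, trace_one, Fintype.card_fin,
    Nat.cast_ofNat, smul_eq_mul, Algebra.mul_smul_comm, mul_one]
  ring

lemma two_mul_trace_sub_card_le_trace_mul_self {n : Type*} [Fintype n] [DecidableEq n]
    {X : Matrix n n ℂ} (hX : X.IsHermitian) :
    2 * X.trace - Fintype.card n ≤ (X * X).trace := by
  have h := (posSemidef_conjTranspose_mul_self (X - 1)).trace_nonneg
  rw [conjTranspose_sub, hX.eq, conjTranspose_one, sub_mul, mul_sub, mul_sub, trace_sub,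
    trace_sub, trace_sub] at h
  simp only [mul_one, one_mul, trace_one] at h
  rw [← sub_nonneg]
  convert h using 1
  ring

/-- if `B i j ∈ M₂(ℂ)` satisfy
(i) `∑ i j, ξ i conj (ξ j) • B i j ≻ 0` for every nonzero `ξ ∈ ℂ²`,
(ii) `B₁₁ + B₂₂ = 2 I`, and (iii) `tr (B i j) = 2 δ_{ij}`, then
`Φ = D(B₁₁, B₂₂) − D(B₁₂, B₂₁) ≥ 1` (and `Φ` is real). -/
theorem stmt12 (B : Fin 2 → Fin 2 → Matrix (Fin 2) (Fin 2) ℂ)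
    (hpos : ∀ ξ : Fin 2 → ℂ, ξ ≠ 0 →
      (∑ i : Fin 2, ∑ j : Fin 2, (ξ i * (starRingEnd ℂ) (ξ j)) • B i j).PosDef)
    (hsum : B 0 0 + B 1 1 = (2 : ℂ) • (1 : Matrix (Fin 2) (Fin 2) ℂ))
    (htr : ∀ i j : Fin 2, Matrix.trace (B i j) = if i = j then (2 : ℂ) else 0) :
    (mixedDisc2 (B 0 0) (B 1 1) - mixedDisc2 (B 0 1) (B 1 0)).im = 0 ∧
    1 ≤ (mixedDisc2 (B 0 0) (B 1 1) - mixedDisc2 (B 0 1) (B 1 0)).re := by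
  have hherm : ∀ ξ : Fin 2 → ℂ, (∑ i, ∑ j, (ξ i * conj (ξ j)) • B i j).IsHermitian := by
    intro ξ
    rcases eq_or_ne ξ 0 with rfl | hξ
    · simp
    · exact (hpos ξ hξ).isHermitian
  have hΦ : mixedDisc2 (B 0 0) (B 1 1) - mixedDisc2 (B 0 1) (B 1 0)
      = (B 0 0 * B 0 0).trace / 2 + (B 0 1 * (B 0 1)ᴴ).trace / 2 := by
    rw [eq_sub_of_add_eq' hsum, apply_one_zero_eq_conjTranspose_of_forall_isHermitian B hherm,
      mixedDisc2_two_smul_one_sub (by simpa using htr 0 0),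
      mixedDisc2_of_trace_eq_zero (by simpa using htr 0 1)]
    ring
  have hsq : 2 ≤ (B 0 0 * B 0 0).trace := by
    convert two_mul_trace_sub_card_le_trace_mul_self
      (isHermitian_apply_self_of_forall_isHermitian B hherm 0) using 1
    norm_num [htr 0 0]
  have hnonneg : 0 ≤ (B 0 1 * (B 0 1)ᴴ).trace :=
    (posSemidef_self_mul_conjTranspose _).trace_nonneg
  -- In `ComplexOrder`, `1 ≤ z` says at once that `z` is real and that `1 ≤ z.re`.
  have hle : 1 ≤ mixedDisc2 (B 0 0) (B 1 1) - mixedDisc2 (B 0 1) (B 1 0) := by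
    rw [hΦ]
    calc (1 : ℂ) = 2 / 2 + 0 / 2 := by norm_num
      _ ≤ _ := by gcongr
  obtain ⟨hre, him⟩ := Complex.le_def.mp hle
  exact ⟨by simpa using him.symm, by simpa using hre⟩
end

section
/- Let B_{ij} ∈ M₂(ℂ) (1 ≤ i,j ≤ 2) satisfy: (i) Σ_{i,j=1}^{2} ξ^i·conj(ξ^j)·B_{ij} is positive definite for every nonzero ξ ∈ ℂ²; (ii) B_{11} + B_{22} = 2·I; (iii) tr(B_{ij}) = 2·δ_{ij}. Then Φ := D(B_{11}, B_{22}) − D(B_{12}, B_{21}) = ∫_{S³} (4 − 3·det C(ξ)) dμ(ξ), where C(ξ) := (ξ*B_{ij}ξ)_{1≤i,j≤2} ∈ M₂(ℂ). -/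
open MeasureTheory Metric
open scoped BigOperators ComplexOrder

noncomputable section

/-- `ξ*Uξ = ∑_{p,q} conj(ξ^p) U_{pq} ξ^q`. -/
def quadForm {r : ℕ} (U : Matrix (Fin r) (Fin r) ℂ) (ξ : Fin r → ℂ) : ℂ :=
  ∑ p, ∑ q, (starRingEnd ℂ) (ξ p) * U p q * ξ q

instance (r : ℕ) : MeasurableSpace (EuclideanSpace ℂ (Fin r)) := borel _
instance (r : ℕ) : BorelSpace (EuclideanSpace ℂ (Fin r)) := ⟨rfl⟩

/-- The normalized rotation-invariant (uniform) probability measure on the unit sphere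
`S^{2r-1} = {ξ ∈ ℂ^r : ‖ξ‖ = 1}`. -/
def sphereUniform (r : ℕ) : Measure (sphere (0 : EuclideanSpace ℂ (Fin r)) 1) :=
  ((Measure.addHaar : Measure (EuclideanSpace ℂ (Fin r))).toSphere Set.univ)⁻¹ •
    (Measure.addHaar : Measure (EuclideanSpace ℂ (Fin r))).toSphere


/-! The integrand is a quadratic polynomial in the quartic monomials `conj ξᵢ ξⱼ conj ξₖ ξₗ`, so
everything reduces to their moments on `S³`. The uniform measure is invariant under unitary maps,
because Haar measure is and `toSphere` is built from Haar measure on a cone. The phase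
`diag(i, 1)` kills every moment whose indices are unbalanced; the coordinate swap and
commutativity identify the others with `a = E|ξ₁|⁴` or `b = E|ξ₁|²|ξ₂|²`; and
`(|ξ₁|² + |ξ₂|²)² = 1` together with invariance under the Hadamard matrix give `2a + 2b = 1` and
`a = a/2 + b`, i.e. `a = 1/3`, `b = 1/6`. Hence `∫ (ξ*Uξ)(ξ*Vξ) dμ = (tr U tr V + tr UV)/6`, and
the identity follows from the trace normalization (iii). -/

open scoped Pointwise

section SphereInvariance

variable {E : Type*} [NormedAddCommGroup E] [InnerProductSpace ℝ E] [FiniteDimensional ℝ E]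
  [MeasurableSpace E] [BorelSpace E]

theorem LinearIsometryEquiv.measurePreserving_addHaar (μ : Measure E) [μ.IsAddHaarMeasure]
    (e : E ≃ₗᵢ[ℝ] E) : MeasurePreserving e μ μ := by
  rw [Measure.isAddLeftInvariant_eq_smul μ volume]
  exact e.measurePreserving.smul_measure _

def LinearIsometryEquiv.sphereHomeomorph (e : E ≃ₗᵢ[ℝ] E) :
    sphere (0 : E) 1 ≃ₜ sphere (0 : E) 1 :=
  e.toHomeomorph.subtype fun x => by simp

theorem LinearIsometryEquiv.measurePreserving_sphereHomeomorph (μ : Measure E)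
    [μ.IsAddHaarMeasure] (e : E ≃ₗᵢ[ℝ] E) :
    MeasurePreserving e.sphereHomeomorph μ.toSphere μ.toSphere := by
  refine ⟨e.sphereHomeomorph.continuous.measurable, Measure.ext fun s hs => ?_⟩
  have hcoe : ((↑) '' (e.sphereHomeomorph ⁻¹' s) : Set E) = e ⁻¹' ((↑) '' s) := by
    ext x
    constructor
    · rintro ⟨y, hy, rfl⟩
      exact ⟨_, hy, rfl⟩
    · rintro ⟨y, hy, hxy⟩
      exact ⟨e.sphereHomeomorph.symm y, by simpa using hy,
        by simp [LinearIsometryEquiv.sphereHomeomorph, hxy]⟩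
  have hsmul :
      Set.Ioo (0 : ℝ) 1 • e ⁻¹' ((↑) '' s) = e ⁻¹' (Set.Ioo (0 : ℝ) 1 • (↑) '' s) := by
    rw [← e.symm_symm, ← e.symm.image_eq_preimage_symm, ← e.symm.image_eq_preimage_symm]
    exact (Set.image_image2_distrib_right fun a x => _root_.map_smul e.symm a x).symm
  rw [Measure.map_apply e.sphereHomeomorph.continuous.measurable hs,
    Measure.toSphere_apply' _ (hs.preimage e.sphereHomeomorph.continuous.measurable),
    Measure.toSphere_apply' _ hs, hcoe, hsmul,
    (e.measurePreserving_addHaar μ).measure_preimage_emb e.toHomeomorph.measurableEmbedding]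

end SphereInvariance

open ComplexConjugate

section UniformMeasure

variable {n : ℕ}

instance [NeZero n] : IsProbabilityMeasure (sphereUniform n) := by
  constructor
  have hne : (Measure.addHaar : Measure (EuclideanSpace ℂ (Fin n))).toSphere Set.univ ≠ 0 :=
    (Measure.measure_univ_pos.2 (Measure.toSphere_ne_zero _)).ne'
  rw [sphereUniform, Measure.smul_apply, smul_eq_mul]
  exact ENNReal.inv_mul_cancel hne (measure_ne_top _ _)

theorem Continuous.integrable_sphereUniform [NeZero n] {F : Type*} [NormedAddCommGroup F]
    {f : sphere (0 : EuclideanSpace ℂ (Fin n)) 1 → F} (hf : Continuous f) :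
    Integrable f (sphereUniform n) :=
  hf.integrable_of_hasCompactSupport (.of_compactSpace f)

end UniformMeasure

open Matrix

def Matrix.toEuclideanIsometry {ι 𝕜 : Type*} [Fintype ι] [DecidableEq ι] [RCLike 𝕜]
    (U : Matrix ι ι 𝕜) (hU : U ∈ unitaryGroup ι 𝕜) :
    EuclideanSpace 𝕜 ι ≃ₗᵢ[ℝ] EuclideanSpace 𝕜 ι :=
  let e := Unitary.linearIsometryEquiv ⟨toEuclideanCLM (n := ι) (𝕜 := 𝕜) U, Unitary.map_mem _ hU⟩
  { e.toLinearEquiv.restrictScalars ℝ with norm_map' := e.norm_map }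

section FourthMoments

variable {n : ℕ}

theorem integral_sphereUniform_comp_mulVec {U : Matrix (Fin n) (Fin n) ℂ}
    (hU : U ∈ unitaryGroup (Fin n) ℂ) (f : (Fin n → ℂ) → ℂ) :
    ∫ ξ, f (U *ᵥ (ξ : EuclideanSpace ℂ (Fin n)).ofLp) ∂sphereUniform n =
      ∫ ξ, f (ξ : EuclideanSpace ℂ (Fin n)).ofLp ∂sphereUniform n := by
  let e := U.toEuclideanIsometry hU
  simp only [sphereUniform, integral_smul_measure]
  congr 1
  exact (e.measurePreserving_sphereHomeomorph _).integral_comp'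
    (f := e.sphereHomeomorph.toMeasurableEquiv) fun ξ => f (ξ : EuclideanSpace ℂ (Fin n)).ofLp

def fourthMonomial (i j k l : Fin n) (x : Fin n → ℂ) : ℂ :=
  conj (x i) * x j * conj (x k) * x l

def fourthMoment (n : ℕ) (i j k l : Fin n) : ℂ :=
  ∫ ξ, fourthMonomial i j k l (ξ : EuclideanSpace ℂ (Fin n)).ofLp ∂sphereUniform n

theorem fourthMoment_comm_left (i j k l : Fin n) :
    fourthMoment n i j k l = fourthMoment n k j i l := by
  simp only [fourthMoment, fourthMonomial]
  congr with ξ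
  ring

theorem fourthMoment_comm_right (i j k l : Fin n) :
    fourthMoment n i j k l = fourthMoment n i l k j := by
  simp only [fourthMoment, fourthMonomial]
  congr with ξ
  ring

theorem quadForm_mul_quadForm (U V : Matrix (Fin n) (Fin n) ℂ) (x : Fin n → ℂ) :
    quadForm U x * quadForm V x =
      ∑ i, ∑ j, ∑ k, ∑ l, U i j * V k l * fourthMonomial i j k l x := by
  simp only [quadForm, Finset.sum_mul_sum]
  refine Finset.sum_congr rfl fun i _ => Finset.sum_comm.trans <| Finset.sum_congr rfl fun j _ =>
    Finset.sum_congr rfl fun k _ => Finset.sum_congr rfl fun l _ => ?_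
  simp only [fourthMonomial]
  ring

theorem integral_quadForm_mul_quadForm_eq_sum [NeZero n] (U V : Matrix (Fin n) (Fin n) ℂ) :
    ∫ ξ, quadForm U (ξ : EuclideanSpace ℂ (Fin n)).ofLp *
        quadForm V (ξ : EuclideanSpace ℂ (Fin n)).ofLp ∂sphereUniform n =
      ∑ i, ∑ j, ∑ k, ∑ l, U i j * V k l * fourthMoment n i j k l := by
  simp_rw [quadForm_mul_quadForm]
  simp (disch := exact fun _ _ =>
      Continuous.integrable_sphereUniform (by unfold fourthMonomial; fun_prop))
    only [integral_finsetSum, integral_const_mul, fourthMoment]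

theorem integrable_quadForm_mul_quadForm [NeZero n] (U V : Matrix (Fin n) (Fin n) ℂ) :
    Integrable (fun ξ : sphere (0 : EuclideanSpace ℂ (Fin n)) 1 =>
      quadForm U (ξ : EuclideanSpace ℂ (Fin n)).ofLp *
        quadForm V (ξ : EuclideanSpace ℂ (Fin n)).ofLp) (sphereUniform n) :=
  Continuous.integrable_sphereUniform (by unfold quadForm; fun_prop)

theorem quadForm_one_of_mem_sphere {x : EuclideanSpace ℂ (Fin n)} (hx : x ∈ sphere 0 1) :
    quadForm 1 x.ofLp = 1 := by
  have h := EuclideanSpace.inner_eq_star_dotProduct x x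
  rw [inner_self_eq_norm_sq_to_K, mem_sphere_zero_iff_norm.1 hx] at h
  simpa [quadForm, one_apply, dotProduct, mul_comm] using h.symm

theorem sum_fourthMoment_diag [NeZero n] : ∑ i, ∑ k, fourthMoment n i i k k = 1 := by
  have h := integral_quadForm_mul_quadForm_eq_sum (n := n) 1 1
  simpa [one_apply, quadForm_one_of_mem_sphere] using h.symm

theorem fourthMoment_eq_zero_of_diagonal {c : Fin n → ℂ}
    (hc : diagonal c ∈ unitaryGroup (Fin n) ℂ) {i j k l : Fin n}
    (h : conj (c i) * c j * conj (c k) * c l ≠ 1) : fourthMoment n i j k l = 0 := by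
  have hmono : ∀ x, fourthMonomial i j k l (diagonal c *ᵥ x) =
      conj (c i) * c j * conj (c k) * c l * fourthMonomial i j k l x := by
    intro x
    simp only [fourthMonomial, mulVec_diagonal, map_mul]
    ring
  have hinv := integral_sphereUniform_comp_mulVec hc (fourthMonomial i j k l)
  simp_rw [hmono, integral_const_mul] at hinv
  have hzero : (conj (c i) * c j * conj (c k) * c l - 1) * fourthMoment n i j k l = 0 := by
    rw [fourthMoment]
    linear_combination hinv
  exact (mul_eq_zero.1 hzero).resolve_left (sub_ne_zero.2 h)

end FourthMoments

section TwoDimensions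

open Complex

theorem swap_mem_unitaryGroup : !![(0 : ℂ), 1; 1, 0] ∈ unitaryGroup (Fin 2) ℂ := by
  rw [mem_unitaryGroup_iff]
  ext i j
  fin_cases i <;> fin_cases j <;> simp [mul_apply]

theorem fourthMoment_two_balanced :
    fourthMoment 2 1 1 1 1 = fourthMoment 2 0 0 0 0 ∧
      fourthMoment 2 1 1 0 0 = fourthMoment 2 0 0 1 1 ∧
      fourthMoment 2 0 1 1 0 = fourthMoment 2 0 0 1 1 ∧
      fourthMoment 2 1 0 0 1 = fourthMoment 2 0 0 1 1 := by
  refine ⟨?_, by rw [fourthMoment_comm_left, fourthMoment_comm_right],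
    fourthMoment_comm_right .., fourthMoment_comm_left ..⟩
  rw [fourthMoment, ← integral_sphereUniform_comp_mulVec swap_mem_unitaryGroup]
  simp [fourthMoment, fourthMonomial, mulVec, vecHead]

theorem phase_mem_unitaryGroup : diagonal ![I, 1] ∈ unitaryGroup (Fin 2) ℂ := by
  rw [mem_unitaryGroup_iff]
  ext i j
  fin_cases i <;> fin_cases j <;> simp

theorem inv_sqrt_two_mul_self : (Real.sqrt 2 : ℂ)⁻¹ * (Real.sqrt 2 : ℂ)⁻¹ = 1 / 2 := by
  rw [← mul_inv, ← Complex.ofReal_mul, Real.mul_self_sqrt zero_le_two]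
  norm_num

theorem fourthMoment_two_eq_zero {i j k l : Fin 2}
    (h : conj (![I, 1] i) * ![I, 1] j * conj (![I, 1] k) * ![I, 1] l ≠ 1) :
    fourthMoment 2 i j k l = 0 :=
  fourthMoment_eq_zero_of_diagonal phase_mem_unitaryGroup h

def hadamardMatrix : Matrix (Fin 2) (Fin 2) ℂ :=
  (Real.sqrt 2 : ℂ)⁻¹ • !![1, 1; 1, -1]

theorem hadamardMatrix_mem_unitaryGroup : hadamardMatrix ∈ unitaryGroup (Fin 2) ℂ := by
  have h := inv_sqrt_two_mul_self
  rw [mem_unitaryGroup_iff]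
  ext i j
  fin_cases i <;> fin_cases j <;> simp [hadamardMatrix, mul_apply] <;> linear_combination 2 * h

theorem fourthMonomial_hadamardMatrix_mulVec (x : Fin 2 → ℂ) :
    fourthMonomial 0 0 0 0 (hadamardMatrix *ᵥ x) =
      quadForm (of fun _ _ => 1 / 2) x * quadForm (of fun _ _ => 1 / 2) x := by
  have h := inv_sqrt_two_mul_self
  simp [fourthMonomial, hadamardMatrix, quadForm, mulVec, Fin.sum_univ_two]
  linear_combination ((conj (x 0) + conj (x 1)) * (x 0 + x 1)) ^ 2 *
    ((Real.sqrt 2 : ℂ)⁻¹ * (Real.sqrt 2 : ℂ)⁻¹ + 1 / 2) * h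

theorem fourthMoment_two_zero_eq_sum :
    fourthMoment 2 0 0 0 0 = ∑ i, ∑ j, ∑ k, ∑ l, fourthMoment 2 i j k l / 4 := by
  rw [fourthMoment, ← integral_sphereUniform_comp_mulVec hadamardMatrix_mem_unitaryGroup]
  simp_rw [fourthMonomial_hadamardMatrix_mulVec]
  rw [integral_quadForm_mul_quadForm_eq_sum]
  congr! 4 with i j k l
  simp only [of_apply]
  ring

theorem fourthMoment_two_values :
    fourthMoment 2 0 0 0 0 = 1 / 3 ∧ fourthMoment 2 0 0 1 1 = 1 / 6 := by
  obtain ⟨h1111, h1100, h0110, h1001⟩ := fourthMoment_two_balanced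
  have hnorm := sum_fourthMoment_diag (n := 2)
  have hhad := fourthMoment_two_zero_eq_sum
  simp only [Fin.sum_univ_two, h1111, h1100, h0110, h1001] at hnorm hhad
  simp (disch := norm_num [Complex.ext_iff]) only [fourthMoment_two_eq_zero] at hhad
  constructor
  · linear_combination hnorm / 3 + 2 * hhad / 3
  · linear_combination hnorm / 6 - 2 * hhad / 3

theorem fourthMoment_two (i j k l : Fin 2) :
    fourthMoment 2 i j k l =
      ((if i = j ∧ k = l then 1 else 0) + (if i = l ∧ k = j then 1 else 0)) / 6 := by
  obtain ⟨h1111, h1100, h0110, h1001⟩ := fourthMoment_two_balanced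
  obtain ⟨h0000, h0011⟩ := fourthMoment_two_values
  fin_cases i <;> fin_cases j <;> fin_cases k <;> fin_cases l <;>
    simp (disch := norm_num [Complex.ext_iff]) [fourthMoment_two_eq_zero, h1111, h1100, h0110,
      h1001, h0000, h0011] <;> norm_num

theorem integral_quadForm_mul_quadForm_two (U V : Matrix (Fin 2) (Fin 2) ℂ) :
    ∫ ξ, quadForm U (ξ : EuclideanSpace ℂ (Fin 2)).ofLp *
        quadForm V (ξ : EuclideanSpace ℂ (Fin 2)).ofLp ∂sphereUniform 2 =
      (trace U * trace V + trace (U * V)) / 6 := by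
  rw [integral_quadForm_mul_quadForm_eq_sum]
  simp [fourthMoment_two, Fin.sum_univ_two, trace_fin_two, mul_apply]
  ring

theorem stmt13_general (B : Fin 2 → Fin 2 → Matrix (Fin 2) (Fin 2) ℂ)
    (htr : ∀ i j : Fin 2, Matrix.trace (B i j) = if i = j then (2 : ℂ) else 0) :
    mixedDisc2 (B 0 0) (B 1 1) - mixedDisc2 (B 0 1) (B 1 0)
      = ∫ ξ, (4 - 3 * Matrix.det
          (Matrix.of fun i j : Fin 2 =>
            quadForm (B i j) (fun p => (ξ : EuclideanSpace ℂ (Fin 2)) p)))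
          ∂(sphereUniform 2) := by
  have hintegrable := integrable_quadForm_mul_quadForm (n := 2)
  simp only [det_fin_two, of_apply]
  rw [integral_sub (integrable_const _) ?_,
    integral_const_mul, integral_sub (hintegrable _ _) (hintegrable _ _),
    integral_quadForm_mul_quadForm_two, integral_quadForm_mul_quadForm_two]
  · simp [mixedDisc2, htr]
    ring
  · exact ((hintegrable _ _).sub (hintegrable _ _)).const_mul 3

/-- under the rank-two normalizations (i)–(iii),
`Φ = D(B₁₁,B₂₂) − D(B₁₂,B₂₁) = ∫_{S³} (4 − 3 det C(ξ)) dμ(ξ)`,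
where `C(ξ) = (ξ* B_{ij} ξ)_{1≤i,j≤2}`. -/
theorem stmt13 (B : Fin 2 → Fin 2 → Matrix (Fin 2) (Fin 2) ℂ)
    (hpos : ∀ ξ : Fin 2 → ℂ, ξ ≠ 0 →
      (∑ i : Fin 2, ∑ j : Fin 2, (ξ i * (starRingEnd ℂ) (ξ j)) • B i j).PosDef)
    (hsum : B 0 0 + B 1 1 = (2 : ℂ) • (1 : Matrix (Fin 2) (Fin 2) ℂ))
    (htr : ∀ i j : Fin 2, Matrix.trace (B i j) = if i = j then (2 : ℂ) else 0) :
    mixedDisc2 (B 0 0) (B 1 1) - mixedDisc2 (B 0 1) (B 1 0)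
      = ∫ ξ, (4 - 3 * Matrix.det
          (Matrix.of fun i j : Fin 2 =>
            quadForm (B i j) (fun p => (ξ : EuclideanSpace ℂ (Fin 2)) p)))
          ∂(sphereUniform 2) :=
  stmt13_general B htr
end TwoDimensions
end
end

section
/- Let r ≥ 1, let B_{ij} ∈ M_r(ℂ) (1 ≤ i,j ≤ r) be arbitrary matrices, and let C₁, C₂ ∈ M_r(ℂ) be invertible. Define B̃_{ij} := Σ_{p,q=1}^{r} conj((C₂)_{ip})·(C₂)_{jq}·(C₁ · B_{pq} · C₁*). Then Σ_{σ∈S_r} sgn(σ)·D(B̃_{1σ(1)},…,B̃_{rσ(r)}) = |det C₁|²·|det C₂|² · Σ_{σ∈S_r} sgn(σ)·D(B_{1σ(1)},…,B_{rσ(r)}). In particular, the operator scaling does not change the sign of Φ := Σ_{σ∈S_r} sgn(σ)·D(B_{1σ(1)},…,B_{rσ(r)}). -/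
open scoped BigOperators

noncomputable section

/-- The mixed discriminant of `r` complex `r × r` matrices. -/
def mixedDisc {r : ℕ} (A : Fin r → Matrix (Fin r) (Fin r) ℂ) : ℂ :=
  (1 / (Nat.factorial r : ℂ)) *
    ∑ σ : Equiv.Perm (Fin r), Matrix.det (Matrix.of fun i k => A (σ i) i k)

/-!
Up to the factor `r!`, `Φ(B)` is Cayley's first hyperdeterminant of the 4-tensor
`(p, q, i, k) ↦ (B_{pq})_{ik}`. Contracting any slot of the tensor with a matrix
multiplies the hyperdeterminant by the determinant of that matrix, because after expanding the
determinant multilinearly the sum over the contraction indices only sees permutations, on which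
the remaining sum transforms by their sign. Gurvits' scaling contracts the four slots with
`conj C₂`, `C₂`, `C₁` and `conj C₁`.
-/

open Matrix Equiv Finset Function

section
variable {n R : Type*} [Fintype n] [DecidableEq n] [CommRing R]

local notation "ε " σ:arg => ((Perm.sign σ : ℤ) : R)

lemma sum_eq_sum_perm_of_not_injective {M : Type*} [AddCommMonoid M] (G : (n → n) → M)
    (hG : ∀ c, ¬ Injective c → G c = 0) : ∑ c, G c = ∑ π : Perm n, G π := by
  let toFun : Perm n ↪ (n → n) := ⟨(⇑), coe_fn_injective⟩
  calc ∑ c, G c = ∑ c ∈ univ.map toFun, G c := by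
        refine (sum_subset (subset_univ _) fun c _ hc => hG c fun hinj => hc ?_).symm
        exact mem_map.2 ⟨ofBijective c hinj.bijective_of_finite, mem_univ _, rfl⟩
    _ = ∑ π : Perm n, G π := sum_map _ _ _

lemma det_of_sum_mul {m : Type*} [Fintype m] (w : n → m → R) (v : n → m → n → R) :
    det (of fun i k => ∑ p, w i p * v i p k)
      = ∑ c : n → m, (∏ i, w i (c i)) * det (of fun i k => v i (c i) k) := by
  have h : (of fun i k => ∑ p, w i p * v i p k) = fun i => ∑ p, w i p • v i p := by
    ext i k; simp [Finset.sum_apply]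
  rw [h]
  change detRowAlternating.toMultilinearMap _ = _
  rw [MultilinearMap.map_sum]
  simp only [MultilinearMap.map_smul_univ, smul_eq_mul]
  rfl

lemma sum_prod_mul_eq_det_mul_of_alternating [IsAddTorsionFree R] (M : Matrix n n R)
    (G : (n → n) → R)
    (hG : ∀ c (π : Perm n), G (c ∘ π) = ε π * G c) :
    ∑ c : n → n, (∏ i, M i (c i)) * G c = det M * G id := by
  have hG₀ : ∀ c : n → n, ¬ Injective c → G c = 0 := by
    intro c hc
    obtain ⟨i, j, hij, hne⟩ := not_injective_iff.1 hc
    have := hG c (swap i j)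
    rw [show c ∘ swap i j = c from funext (apply_swap_eq_self hij), Perm.sign_swap hne] at this
    exact self_eq_neg.1 (by simpa using this)
  rw [sum_eq_sum_perm_of_not_injective _ fun c hc => by rw [hG₀ c hc, mul_zero],
    ← det_transpose, det_apply', sum_mul]
  refine sum_congr rfl fun π _ => ?_
  rw [show (π : n → n) = id ∘ π from rfl, hG]
  simp only [transpose_apply, id_comp]
  ring

lemma sum_det_submatrix_mul (M : Matrix n n R) (H : (n → n) → R) :
    ∑ c : n → n, det (M.submatrix id c) * H c = det M * ∑ π : Perm n, ε π * H π := by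
  rw [sum_eq_sum_perm_of_not_injective, mul_sum]
  · exact sum_congr rfl fun π _ => by rw [det_permute']; ring
  · intro c hc
    obtain ⟨i, j, hij, hne⟩ := not_injective_iff.1 hc
    rw [det_zero_of_column_eq hne fun k => by simp [hij], zero_mul]

/-- Cayley's first hyperdeterminant of `(p, q, i, k) ↦ T p q i k`, normalized by fixing the
permutation of the slot `i` to be the identity. -/
def cayleyHyperdet (T : n → n → Matrix n n R) : R :=
  ∑ f : Perm n, ∑ g : Perm n, ε f * ε g * det (of fun i k => T (f i) (g i) i k)

lemma cayleyHyperdet_eq_sum_sign_mul (T : n → n → Matrix n n R) :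
    cayleyHyperdet T
      = ∑ σ : Perm n, ε σ * ∑ τ : Perm n, det (of fun i k => T (τ i) (σ (τ i)) i k) := by
  simp only [cayleyHyperdet, mul_sum]
  conv_rhs => rw [sum_comm]
  refine sum_congr rfl fun τ _ => (Fintype.sum_equiv (Equiv.mulRight τ) _ _ fun σ => ?_).symm
  simp only [coe_mulRight, Perm.coe_mul, Function.comp_apply, Perm.sign_mul, Units.val_mul,
    Int.cast_mul]
  have hτ : ε τ * ε τ = 1 := by
    rw [← Int.cast_mul, ← Units.val_mul, Int.units_mul_self, Units.val_one, Int.cast_one]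
  linear_combination -(ε σ * det (of fun i k => T (τ i) (σ (τ i)) i k)) * hτ

lemma sum_det_of_mul_mul [IsAddTorsionFree R] (X Y : Matrix n n R) (A : n → Matrix n n R) :
    ∑ σ : Perm n, det (of fun i k => (X * A (σ i) * Y) i k)
      = det X * det Y * ∑ σ : Perm n, det (of fun i k => A (σ i) i k) := by
  have hY : ∀ σ : Perm n, (of fun i k => (X * A (σ i) * Y) i k)
      = (of fun i k => ∑ p, X i p * A (σ i) p k) * Y := by
    intro σ; ext i k; simp [mul_apply, sum_mul]
  have hexp : ∀ σ : Perm n, det (of fun i k => ∑ p, X i p * A (σ i) p k)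
      = ∑ c : n → n, (∏ i, X i (c i)) * det (of fun i k => A (σ i) (c i) k) :=
    fun σ => det_of_sum_mul (fun i p => X i p) fun i p => A (σ i) p
  have halt : ∀ (c : n → n) (π : Perm n),
      ∑ σ : Perm n, det (of fun i k => A (σ i) ((c ∘ π) i) k)
        = ε π * ∑ σ : Perm n, det (of fun i k => A (σ i) (c i) k) := by
    intro c π
    rw [mul_sum]
    refine Fintype.sum_equiv (Equiv.mulRight π⁻¹) _ _ fun σ => ?_
    rw [← det_permute π]
    congr 1; ext i k; simp
  simp only [hY, det_mul, hexp, ← sum_mul]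
  rw [sum_comm]
  simp only [← mul_sum]
  rw [sum_prod_mul_eq_det_mul_of_alternating X _ halt]
  simp only [id]
  ring

lemma cayleyHyperdet_mul_mul [IsAddTorsionFree R] (X Y : Matrix n n R)
    (T : n → n → Matrix n n R) :
    cayleyHyperdet (fun p q => X * T p q * Y) = det X * det Y * cayleyHyperdet T := by
  rw [cayleyHyperdet_eq_sum_sign_mul, cayleyHyperdet_eq_sum_sign_mul, mul_sum]
  refine sum_congr rfl fun σ _ => ?_
  rw [sum_det_of_mul_mul X Y fun i => T i (σ i)]
  ring

lemma cayleyHyperdet_swap (T : n → n → Matrix n n R) :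
    cayleyHyperdet (fun p q => T q p) = cayleyHyperdet T := by
  rw [cayleyHyperdet, sum_comm]
  exact sum_congr rfl fun g _ => sum_congr rfl fun f _ => by ring

lemma cayleyHyperdet_sum_smul_left (M : Matrix n n R) (T : n → n → Matrix n n R) :
    cayleyHyperdet (fun p q => ∑ a, M p a • T a q) = det M * cayleyHyperdet T := by
  have hexp : ∀ f g : Perm n, det (of fun i k => (∑ a, M (f i) a • T a (g i)) i k)
      = ∑ c : n → n, (∏ i, M (f i) (c i)) * det (of fun i k => T (c i) (g i) i k) := by
    intro f g
    rw [← det_of_sum_mul (fun i a => M (f i) a) fun i a => T a (g i) i]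
    congr 1; ext i k; simp [Matrix.sum_apply]
  have hcol : ∀ c : n → n, ∑ f : Perm n, ε f * ∏ i, M (f i) (c i) = det (M.submatrix id c) :=
    fun c => by rw [det_apply']; rfl
  simp only [cayleyHyperdet, hexp, mul_sum]
  calc _ = ∑ g : Perm n, ε g * ∑ c : n → n, (∑ f : Perm n, ε f * ∏ i, M (f i) (c i)) *
          det (of fun i k => T (c i) (g i) i k) := by
        rw [sum_comm]; refine sum_congr rfl fun g _ => ?_
        rw [sum_comm, mul_sum]; refine sum_congr rfl fun c _ => ?_
        rw [sum_mul, mul_sum]; exact sum_congr rfl fun f _ => by ring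
    _ = _ := by
        simp only [hcol, sum_det_submatrix_mul, mul_sum]
        rw [sum_comm]
        exact sum_congr rfl fun f _ => sum_congr rfl fun g _ => by ring

lemma cayleyHyperdet_sum_smul (M N : Matrix n n R) (T : n → n → Matrix n n R) :
    cayleyHyperdet (fun i j => ∑ p, ∑ q, (M i p * N j q) • T p q)
      = det M * det N * cayleyHyperdet T := by
  have h : (fun i j => ∑ p, ∑ q, (M i p * N j q) • T p q)
      = fun i j => ∑ p, M i p • (fun p' j' => ∑ q, N j' q • T p' q) p j := by
    ext i j : 2; simp only [smul_sum, mul_smul]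
  rw [h, cayleyHyperdet_sum_smul_left, ← cayleyHyperdet_swap, cayleyHyperdet_sum_smul_left,
    cayleyHyperdet_swap, mul_assoc]

end

lemma sum_sign_mul_mixedDisc {r : ℕ} (B : Fin r → Fin r → Matrix (Fin r) (Fin r) ℂ) :
    ∑ σ : Perm (Fin r), ((Perm.sign σ : ℤ) : ℂ) * mixedDisc (fun i => B i (σ i))
      = 1 / (r.factorial : ℂ) * cayleyHyperdet B := by
  simp only [mixedDisc, cayleyHyperdet_eq_sum_sign_mul, mul_sum]
  exact sum_congr rfl fun σ _ => sum_congr rfl fun τ _ => by ring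

theorem stmt14_general (r : ℕ) (B : Fin r → Fin r → Matrix (Fin r) (Fin r) ℂ)
    (C₁ C₂ : Matrix (Fin r) (Fin r) ℂ)
    (Bt : Fin r → Fin r → Matrix (Fin r) (Fin r) ℂ)
    (hBt : ∀ i j, Bt i j
      = ∑ p : Fin r, ∑ q : Fin r,
          ((starRingEnd ℂ) (C₂ i p) * C₂ j q) • (C₁ * B p q * C₁.conjTranspose)) :
    ∑ σ : Equiv.Perm (Fin r),
        ((Equiv.Perm.sign σ : ℤ) : ℂ) * mixedDisc (fun i => Bt i (σ i))
      = ((‖Matrix.det C₁‖ : ℝ) : ℂ) ^ 2 * ((‖Matrix.det C₂‖ : ℝ) : ℂ) ^ 2 *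
          ∑ σ : Equiv.Perm (Fin r),
            ((Equiv.Perm.sign σ : ℤ) : ℂ) * mixedDisc (fun i => B i (σ i)) := by
  have hBt' : Bt = fun i j => ∑ p, ∑ q,
      (C₂.map (starRingEnd ℂ) i p * C₂ j q) • (C₁ * B p q * C₁ᴴ) := funext₂ hBt
  have hdet : det (C₂.map (starRingEnd ℂ)) = starRingEnd ℂ (det C₂) :=
    ((starRingEnd ℂ).map_det C₂).symm
  rw [sum_sign_mul_mixedDisc, sum_sign_mul_mixedDisc, hBt', cayleyHyperdet_sum_smul,
    cayleyHyperdet_mul_mul, det_conjTranspose, hdet, ← Complex.mul_conj', ← Complex.mul_conj',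
    Complex.star_def]
  ring

/-- invariance of `Φ` under Gurvits' operator scaling: for arbitrary
`B i j ∈ M_r(ℂ)` and invertible `C₁, C₂ ∈ M_r(ℂ)`, setting
`B̃_{ij} := ∑_{p,q} conj((C₂)_{ip}) (C₂)_{jq} · (C₁ B_{pq} C₁*)`, one has
`∑_σ sgn σ · D(B̃₁σ(1),…,B̃_rσ(r)) = |det C₁|² |det C₂|² ∑_σ sgn σ · D(B₁σ(1),…,B_rσ(r))`;
in particular the scaling does not change the sign of `Φ`. -/
theorem stmt14 (r : ℕ) (hr : 1 ≤ r) (B : Fin r → Fin r → Matrix (Fin r) (Fin r) ℂ)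
    (C₁ C₂ : Matrix (Fin r) (Fin r) ℂ)
    (hC₁ : IsUnit (Matrix.det C₁)) (hC₂ : IsUnit (Matrix.det C₂))
    (Bt : Fin r → Fin r → Matrix (Fin r) (Fin r) ℂ)
    (hBt : ∀ i j, Bt i j
      = ∑ p : Fin r, ∑ q : Fin r,
          ((starRingEnd ℂ) (C₂ i p) * C₂ j q) • (C₁ * B p q * C₁.conjTranspose)) :
    ∑ σ : Equiv.Perm (Fin r),
        ((Equiv.Perm.sign σ : ℤ) : ℂ) * mixedDisc (fun i => Bt i (σ i))
      = ((‖Matrix.det C₁‖ : ℝ) : ℂ) ^ 2 * ((‖Matrix.det C₂‖ : ℝ) : ℂ) ^ 2 *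
          ∑ σ : Equiv.Perm (Fin r),
            ((Equiv.Perm.sign σ : ℤ) : ℂ) * mixedDisc (fun i => B i (σ i)) :=
  stmt14_general r B C₁ C₂ Bt hBt
end
end

section
/- Let r ≥ 1 and let B_{ij} ∈ M_r(ℂ) (1 ≤ i,j ≤ r) be arbitrary matrices. Define the dual family A_{pq} ∈ M_r(ℂ) (1 ≤ p,q ≤ r) by (A_{pq})_{ij} := (B_{ij})_{pq}. Then Σ_{σ∈S_r} sgn(σ)·D(B_{1σ(1)},…,B_{rσ(r)}) = Σ_{σ∈S_r} sgn(σ)·D(A_{1σ(1)},…,A_{rσ(r)}). -/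
/-!
Expanding every mixed discriminant and every determinant turns
`r!² · ∑_σ sgn σ · D(B₁σ(1),…,B_rσ(r))` into the fully antisymmetrised sum
`∑_{f,g,h,k ∈ S_r} sgn f sgn g sgn h sgn k ∏_i (B_{f i, g i})_{h i, k i}`, which is `r!` times
Cayley's hyperdeterminant of the `4`-tensor `B`. The reindexing `(f,g,h,k) ↦ (h,k,f,g)` shows
that this sum does not change when `B` is replaced by its dual family `A`.
-/

open scoped BigOperators

noncomputable section

open Equiv Equiv.Perm Finset Nat

section Cayley

variable {n R : Type*} [Fintype n] [DecidableEq n] [CommRing R]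

def cayleySum (T : n → n → n → n → R) : R :=
  ∑ f : Perm n, ∑ g : Perm n, ∑ h : Perm n, ∑ k : Perm n,
    ((sign f * sign g * sign h * sign k : ℤˣ) : R) * ∏ i, T (f i) (g i) (h i) (k i)

theorem cayleySum_eq_factorial_mul (T : n → n → n → n → R) :
    cayleySum T = (Fintype.card n)! *
      ∑ f : Perm n, ∑ g : Perm n, ∑ h : Perm n,
        ((sign f * sign g * sign h : ℤˣ) : R) * ∏ i, T (f i) (g i) (h i) i := by
  have h_reindex : ∀ k : Perm n, ∑ f : Perm n, ∑ g : Perm n, ∑ h : Perm n,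
      ((sign f * sign g * sign h * sign k : ℤˣ) : R) * ∏ i, T (f i) (g i) (h i) (k i) =
      ∑ f : Perm n, ∑ g : Perm n, ∑ h : Perm n,
        ((sign f * sign g * sign h : ℤˣ) : R) * ∏ i, T (f i) (g i) (h i) i := by
    intro k
    rw [← Equiv.sum_comp (Equiv.mulRight k)]
    refine sum_congr rfl fun f _ => ?_
    rw [← Equiv.sum_comp (Equiv.mulRight k)]
    refine sum_congr rfl fun g _ => ?_
    rw [← Equiv.sum_comp (Equiv.mulRight k)]
    refine sum_congr rfl fun h _ => ?_
    have hsign : sign (f * k) * sign (g * k) * sign (h * k) * sign k = sign f * sign g * sign h := by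
      obtain hk | hk := Int.units_eq_one_or (sign k) <;> simp [Perm.sign_mul, hk]
    simp only [Equiv.coe_mulRight, hsign]
    exact congrArg _ (Equiv.prod_comp k fun i => T (f i) (g i) (h i) i)
  rw [cayleySum]
  conv_lhs => enter [2, f, 2, g]; rw [Finset.sum_comm]
  conv_lhs => enter [2, f]; rw [Finset.sum_comm]
  rw [Finset.sum_comm]
  simp only [h_reindex, sum_const, Finset.card_univ, Fintype.card_perm, nsmul_eq_mul]

theorem cayleySum_swap (T : n → n → n → n → R) :
    cayleySum (fun p q i j => T i j p q) = cayleySum T := by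
  let e : (Perm n × Perm n × Perm n × Perm n) ≃ (Perm n × Perm n × Perm n × Perm n) :=
    ⟨fun x => (x.2.2.1, x.2.2.2, x.1, x.2.1), fun x => (x.2.2.1, x.2.2.2, x.1, x.2.1),
      fun _ => rfl, fun _ => rfl⟩
  simp only [cayleySum, ← Fintype.sum_prod_type']
  refine Fintype.sum_equiv e _ _ fun x => ?_
  simp only [e, Equiv.coe_fn_mk]
  congr 3
  ac_rfl

end Cayley

theorem factorial_mul_mixedDisc {r : ℕ} (M : Fin r → Matrix (Fin r) (Fin r) ℂ) :
    (r ! : ℂ) * mixedDisc M =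
      ∑ f : Perm (Fin r), ∑ h : Perm (Fin r), ((sign h : ℤˣ) : ℂ) * ∏ i, M (f i) (h i) i := by
  rw [mixedDisc, ← mul_assoc, mul_one_div_cancel (mod_cast r.factorial_ne_zero), one_mul]
  simp only [Matrix.det_apply', Matrix.of_apply]
  rw [Finset.sum_comm]
  conv_rhs => rw [Finset.sum_comm]
  refine sum_congr rfl fun h _ => ?_
  conv_rhs => rw [← Equiv.sum_comp (Equiv.mulRight h)]
  rfl

theorem factorial_sq_mul_sum_sign_mul_mixedDisc {r : ℕ}
    (C : Fin r → Fin r → Matrix (Fin r) (Fin r) ℂ) :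
    (r ! : ℂ) ^ 2 * ∑ σ : Perm (Fin r), ((sign σ : ℤ) : ℂ) * mixedDisc (fun i => C i (σ i)) =
      cayleySum fun p q i j => C p q i j := by
  rw [cayleySum_eq_factorial_mul, Fintype.card_fin, sq, mul_assoc]
  congr 1
  calc (r ! : ℂ) * ∑ σ : Perm (Fin r), ((sign σ : ℤ) : ℂ) * mixedDisc (fun i => C i (σ i))
      = ∑ σ : Perm (Fin r), ∑ f : Perm (Fin r), ∑ h : Perm (Fin r),
          ((sign σ * sign h : ℤˣ) : ℂ) * ∏ i, C (f i) (σ (f i)) (h i) i := by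
        simp only [mul_sum, mul_left_comm (r ! : ℂ), factorial_mul_mixedDisc, Units.val_mul,
          Int.cast_mul, mul_assoc]
    _ = _ := by
        rw [Finset.sum_comm]
        refine sum_congr rfl fun f _ => ?_
        conv_rhs => rw [← Equiv.sum_comp (Equiv.mulRight f)]
        refine sum_congr rfl fun σ _ => sum_congr rfl fun h _ => ?_
        obtain hf | hf := Int.units_eq_one_or (sign f) <;>
          simp [Perm.sign_mul, hf, mul_comm]

theorem stmt16_general (r : ℕ) (B : Fin r → Fin r → Matrix (Fin r) (Fin r) ℂ)
    (A : Fin r → Fin r → Matrix (Fin r) (Fin r) ℂ)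
    (hA : ∀ p q i j, A p q i j = B i j p q) :
    ∑ σ : Equiv.Perm (Fin r),
        ((Equiv.Perm.sign σ : ℤ) : ℂ) * mixedDisc (fun i => B i (σ i))
      = ∑ σ : Equiv.Perm (Fin r),
        ((Equiv.Perm.sign σ : ℤ) : ℂ) * mixedDisc (fun p => A p (σ p)) := by
  have hAB : (fun p q i j => A p q i j) = fun p q i j => B i j p q := by
    funext p q i j
    exact hA p q i j
  refine mul_left_cancel₀ (pow_ne_zero 2 (mod_cast r.factorial_ne_zero : (r ! : ℂ) ≠ 0)) ?_
  rw [factorial_sq_mul_sum_sign_mul_mixedDisc, factorial_sq_mul_sum_sign_mul_mixedDisc, hAB]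
  exact (cayleySum_swap _).symm

/-- for arbitrary `B i j ∈ M_r(ℂ)`, defining the dual family
`(A_{pq})_{ij} := (B_{ij})_{pq}`, one has
`∑_σ sgn σ · D(B₁σ(1),…,B_rσ(r)) = ∑_σ sgn σ · D(A₁σ(1),…,A_rσ(r))`. -/
theorem stmt16 (r : ℕ) (hr : 1 ≤ r) (B : Fin r → Fin r → Matrix (Fin r) (Fin r) ℂ)
    (A : Fin r → Fin r → Matrix (Fin r) (Fin r) ℂ)
    (hA : ∀ p q i j, A p q i j = B i j p q) :
    ∑ σ : Equiv.Perm (Fin r),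
        ((Equiv.Perm.sign σ : ℤ) : ℂ) * mixedDisc (fun i => B i (σ i))
      = ∑ σ : Equiv.Perm (Fin r),
        ((Equiv.Perm.sign σ : ℤ) : ℂ) * mixedDisc (fun p => A p (σ p)) :=
  stmt16_general r B A hA
end
end
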